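/- Let H be a Krein space and T : ℓ²(I) → H a bounded surjective operator. The following are equivalent: (1) there exists a unitary operator U on ℓ²(I) such that the family (TU e_i)_{i∈I} is a J-frame for H; (2) there exists Q ∈ Q such that Q T T* (I − Q)* = 0; (3) there exist bounded operators T₁, T₂ : ℓ²(I) → H with closed ranges such that T = T₁ + T₂, R(T₁) is uniformly J-positive, R(T₂) is uniformly J-negative, and T₁T₂* = T₂T₁* = 0. -/

import Mathlib

/- Frames for Krein spaces ("J-frames"), following Giribet–Maestripieri–Martínez Pería–Massey.

A Krein space is modelled as a complex Hilbert space `H` together with a fundamental symmetry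
`J : H →L[ℂ] H` (selfadjoint, `J ∘L J = 1`); the indefinite inner product is `[x,y] = ⟪J x, y⟫`. -/

noncomputable section

open scoped ComplexInnerProductSpace ComplexOrder
open ContinuousLinearMap

attribute [local instance] Classical.propDecidable

namespace KreinFrames

universe u

variable {H : Type*} [NormedAddCommGroup H] [InnerProductSpace ℂ H]

/-- A subspace `M` is uniformly `J`-positive: `[x,x] ≥ α‖x‖²` on `M` for some `α > 0`. -/
def UnifJPos (J : H →L[ℂ] H) (M : Submodule ℂ H) : Prop :=
  ∃ α : ℝ, 0 < α ∧ ∀ x ∈ M, α * ‖x‖ ^ 2 ≤ (⟪J x, x⟫).re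

/-- A subspace `M` is uniformly `J`-negative: `[x,x] ≤ -α‖x‖²` on `M` for some `α > 0`. -/
def UnifJNeg (J : H →L[ℂ] H) (M : Submodule ℂ H) : Prop :=
  ∃ α : ℝ, 0 < α ∧ ∀ x ∈ M, (⟪J x, x⟫).re ≤ -(α * ‖x‖ ^ 2)

/-- Maximal uniformly `J`-positive subspace. -/
def MaxUnifJPos (J : H →L[ℂ] H) (M : Submodule ℂ H) : Prop :=
  UnifJPos J M ∧ ∀ M' : Submodule ℂ H, UnifJPos J M' → M ≤ M' → M' = M

/-- Maximal uniformly `J`-negative subspace. -/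
def MaxUnifJNeg (J : H →L[ℂ] H) (M : Submodule ℂ H) : Prop :=
  UnifJNeg J M ∧ ∀ M' : Submodule ℂ H, UnifJNeg J M' → M ≤ M' → M' = M

/-- The `J`-orthogonal companion `M^{[⊥]} = {x | [x,m] = 0 ∀ m ∈ M}` of a subspace `M`. -/
def Jorth (J : H →L[ℂ] H) (M : Submodule ℂ H) : Submodule ℂ H where
  carrier := {x | ∀ m ∈ M, ⟪J x, m⟫ = 0}
  zero_mem' := by intro m _; simp
  add_mem' := by
    intro a b ha hb m hm
    rw [map_add, inner_add_left, ha m hm, hb m hm, add_zero]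
  smul_mem' := by
    intro c x hx m hm
    rw [map_smul, inner_smul_left, hx m hm, mul_zero]

/-- `T : ℓ²(I) → H` is the synthesis operator of the family `f`, i.e. `T e_i = f_i`. -/
def IsSynthesis {I : Type*} (f : I → H) (T : lp (fun _ : I => ℂ) 2 →L[ℂ] H) : Prop :=
  ∀ i, T (lp.single 2 i 1) = f i

/-- `f` is a `J`-frame: it is a Bessel family (it admits a bounded synthesis operator `T`),
and the ranges of `T₊ = T P₊` and `T₋ = T P₋` (the synthesis operators of the subfamilies of
`J`-nonnegative and `J`-negative vectors) are maximal uniformly `J`-positive resp. maximal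
uniformly `J`-negative subspaces of `H`. -/
def IsJFrame {I : Type*} (J : H →L[ℂ] H) (f : I → H) : Prop :=
  ∃ T Tp Tm : lp (fun _ : I => ℂ) 2 →L[ℂ] H,
    IsSynthesis f T ∧
    IsSynthesis (fun i => if 0 ≤ (⟪J (f i), f i⟫).re then f i else 0) Tp ∧
    IsSynthesis (fun i => if 0 ≤ (⟪J (f i), f i⟫).re then 0 else f i) Tm ∧
    MaxUnifJPos J (LinearMap.range (Tp : lp (fun _ : I => ℂ) 2 →ₗ[ℂ] H)) ∧ MaxUnifJNeg J (LinearMap.range (Tm : lp (fun _ : I => ℂ) 2 →ₗ[ℂ] H))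

/-- `c₀(M, C)`: supremum of `|⟪m,n⟫|` over unit vectors `m ∈ M` and unit `J`-neutral vectors
`n` (the cone `C = {n | [n,n] = 0}`). -/
def c0 (J : H →L[ℂ] H) (M : Submodule ℂ H) : ℝ :=
  sSup {r : ℝ | ∃ m ∈ M, ∃ n : H, ⟪J n, n⟫ = 0 ∧ ‖m‖ = 1 ∧ ‖n‖ = 1 ∧ r = ‖⟪m, n⟫‖}

/-- Cosine of the Friedrichs angle between two subspaces. -/
def friedrichs (S T : Submodule ℂ H) : ℝ :=
  sSup {r : ℝ | ∃ x ∈ S ⊓ (S ⊓ T)ᗮ, ∃ y ∈ T ⊓ (S ⊓ T)ᗮ, ‖x‖ = 1 ∧ ‖y‖ = 1 ∧ r = ‖⟪x, y⟫‖}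

/-- The reduced minimum modulus `γ(A) = inf {‖Ax‖ : x ∈ N(A)^⊥, ‖x‖ = 1}`. -/
def rmm {E F : Type*} [NormedAddCommGroup E] [InnerProductSpace ℂ E]
    [NormedAddCommGroup F] [InnerProductSpace ℂ F] (A : E →L[ℂ] F) : ℝ :=
  sInf {r : ℝ | ∃ x ∈ (LinearMap.ker (A : E →ₗ[ℂ] F))ᗮ, ‖x‖ = 1 ∧ r = ‖A x‖}

/-- The set `Q` of bounded idempotents with uniformly `J`-positive range and uniformly
`J`-negative kernel. -/
def QSet (J : H →L[ℂ] H) : Set (H →L[ℂ] H) :=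
  {Q | Q ∘L Q = Q ∧ UnifJPos J (LinearMap.range (Q : H →ₗ[ℂ] H)) ∧ UnifJNeg J (LinearMap.ker (Q : H →ₗ[ℂ] H))}

/-- `ℓ²(s)` as a subspace of `ℓ²(I)`, for `s : Set I`. -/
def lpSub {I : Type*} (s : Set I) : Submodule ℂ (lp (fun _ : I => ℂ) 2) where
  carrier := {x | ∀ i ∉ s, x i = 0}
  zero_mem' := by intro i _; simp
  add_mem' := by
    intro a b ha hb i hi
    have h : (↑(a + b) : ∀ _ : I, ℂ) i = a i + b i := by rw [lp.coeFn_add]; rfl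
    rw [h, ha i hi, hb i hi, add_zero]
  smul_mem' := by
    intro c x hx i hi
    have h : (↑(c • x) : ∀ _ : I, ℂ) i = c • (x i : ℂ) := by rw [lp.coeFn_smul]; rfl
    rw [h, hx i hi, smul_zero]

/-- `S` is the `J`-frame operator of some `J`-frame: `S = T T^#` where `T` is the synthesis
operator of a `J`-frame and `T^# = J₂ T* J`. -/
def IsJFrameOperator {H : Type u} [NormedAddCommGroup H] [InnerProductSpace ℂ H]
    [CompleteSpace H] (J S : H →L[ℂ] H) : Prop :=
  ∃ (I : Type u) (f : I → H) (T Tp Tm : lp (fun _ : I => ℂ) 2 →L[ℂ] H)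
    (J2 : lp (fun _ : I => ℂ) 2 →L[ℂ] lp (fun _ : I => ℂ) 2),
    IsSynthesis f T ∧
    IsSynthesis (fun i => if 0 ≤ (⟪J (f i), f i⟫).re then f i else 0) Tp ∧
    IsSynthesis (fun i => if 0 ≤ (⟪J (f i), f i⟫).re then 0 else f i) Tm ∧
    MaxUnifJPos J (LinearMap.range (Tp : lp (fun _ : I => ℂ) 2 →ₗ[ℂ] H)) ∧ MaxUnifJNeg J (LinearMap.range (Tm : lp (fun _ : I => ℂ) 2 →ₗ[ℂ] H)) ∧
    (∀ (x : lp (fun _ : I => ℂ) 2) (i : I),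
      J2 x i = if 0 ≤ (⟪J (f i), f i⟫).re then (x i : ℂ) else -(x i : ℂ)) ∧
    S = T ∘L J2 ∘L adjoint T ∘L J


/-!
Both (1) and (3) come down to a decomposition `T = T₁ + T₂` in which `R(T₁)` and `R(T₂)` are closed,
uniformly `J`-positive resp. `J`-negative (hence complementary, since `T` is onto) and
`T₁ T₂* = 0`. The idempotent `Q` of (2) is the projection onto `R(T₁)` along `R(T₂)`; conversely
`T₁ = QT` and `T₂ = (1 - Q)T`, because `Q T T* (1 - Q)* = (QT) ((1 - Q)T)*`.

For a `J`-frame, `T₊ T₋* = 0` since the two subfamilies live on disjoint sets of coordinates, and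
maximal uniformly definite subspaces are closed. Conversely, `(QT) ((1 - Q)T)* = 0` gives
`N(QT)^⊥ ⊆ N((1 - Q)T)`, so every vector of a Hilbert basis of `ℓ²(I)` adapted to
`N(QT) ⊕ N(QT)^⊥` is sent by `T` into `N(Q)` or into `R(Q)`. Such a basis can again be indexed
by `I`, because all Hilbert bases of a space have the same cardinality; it provides `U`.
-/

section UniformlyDefinite

variable {J : H →L[ℂ] H} {M N : Submodule ℂ H}

theorem unifJNeg_iff_unifJPos_neg : UnifJNeg J M ↔ UnifJPos (-J) M := by
  simp only [UnifJNeg, UnifJPos, neg_apply, inner_neg_left, Complex.neg_re, le_neg]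

theorem unifJPos_iff_unifJNeg_neg : UnifJPos J M ↔ UnifJNeg (-J) M := by
  rw [unifJNeg_iff_unifJPos_neg, neg_neg]

theorem maxUnifJNeg_iff_maxUnifJPos_neg : MaxUnifJNeg J M ↔ MaxUnifJPos (-J) M := by
  simp only [MaxUnifJNeg, MaxUnifJPos, unifJNeg_iff_unifJPos_neg]

theorem UnifJPos.re_inner_nonneg (hM : UnifJPos J M) {x : H} (hx : x ∈ M) :
    0 ≤ (⟪J x, x⟫).re := by
  obtain ⟨α, hα, hM⟩ := hM
  exact le_trans (by positivity) (hM x hx)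

theorem UnifJNeg.eq_zero_of_re_inner_nonneg (hN : UnifJNeg J N) {x : H} (hx : x ∈ N)
    (h : 0 ≤ (⟪J x, x⟫).re) : x = 0 := by
  obtain ⟨α, hα, hN⟩ := hN
  have : ‖x‖ ^ 2 ≤ 0 := by nlinarith [hN x hx]
  simpa using this

theorem UnifJPos.disjoint (hM : UnifJPos J M) (hN : UnifJNeg J N) : Disjoint M N :=
  Submodule.disjoint_def.2 fun _ hxM hxN =>
    hN.eq_zero_of_re_inner_nonneg hxN (hM.re_inner_nonneg hxM)

theorem UnifJPos.topologicalClosure (hM : UnifJPos J M) : UnifJPos J M.topologicalClosure := by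
  obtain ⟨α, hα, hM⟩ := hM
  refine ⟨α, hα, fun x hx => ?_⟩
  have hclosed : IsClosed {x : H | α * ‖x‖ ^ 2 ≤ (⟪J x, x⟫).re} :=
    isClosed_le (by fun_prop) (by fun_prop)
  exact closure_minimal hM hclosed (M.topologicalClosure_coe ▸ hx)

theorem MaxUnifJPos.isClosed (hM : MaxUnifJPos J M) : IsClosed (M : Set H) := by
  have h : M.topologicalClosure = M := hM.2 _ hM.1.topologicalClosure M.le_topologicalClosure
  exact h ▸ M.isClosed_topologicalClosure

theorem MaxUnifJNeg.isClosed (hM : MaxUnifJNeg J M) : IsClosed (M : Set H) :=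
  (maxUnifJNeg_iff_maxUnifJPos_neg.1 hM).isClosed

theorem UnifJPos.maxUnifJPos_of_sup_eq_top (hM : UnifJPos J M) (hN : UnifJNeg J N)
    (hMN : M ⊔ N = ⊤) : MaxUnifJPos J M := by
  refine ⟨hM, fun M' hM' hle => le_antisymm (fun x hx => ?_) hle⟩
  obtain ⟨m, hm, n, hn, rfl⟩ := Submodule.mem_sup.1 (hMN ▸ Submodule.mem_top : x ∈ M ⊔ N)
  have hnM' : n ∈ M' := by simpa using M'.sub_mem hx (hle hm)
  rwa [Submodule.disjoint_def.1 (hM'.disjoint hN) n hnM' hn, add_zero]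

theorem UnifJNeg.maxUnifJNeg_of_sup_eq_top (hN : UnifJNeg J N) (hM : UnifJPos J M)
    (hMN : M ⊔ N = ⊤) : MaxUnifJNeg J N :=
  maxUnifJNeg_iff_maxUnifJPos_neg.2 <| (unifJNeg_iff_unifJPos_neg.1 hN).maxUnifJPos_of_sup_eq_top
    (unifJPos_iff_unifJNeg_neg.1 hM) (sup_comm M N ▸ hMN)

end UniformlyDefinite

section HilbertBasis

variable {𝕜 E : Type*} [RCLike 𝕜] [NormedAddCommGroup E] [InnerProductSpace 𝕜 E]

open Submodule
open scoped InnerProductSpace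

universe v

theorem _root_.Orthonormal.sumElim {ι₁ ι₂ : Type*} {v₁ : ι₁ → E} {v₂ : ι₂ → E}
    (h₁ : Orthonormal 𝕜 v₁) (h₂ : Orthonormal 𝕜 v₂) (h : ∀ i j, ⟪v₁ i, v₂ j⟫_𝕜 = 0) :
    Orthonormal 𝕜 (Sum.elim v₁ v₂) := by
  classical
  rw [orthonormal_iff_ite] at h₁ h₂ ⊢
  rintro (i | i) (j | j) <;> simp [h₁, h₂, h, inner_eq_zero_symm]

theorem _root_.HilbertBasis.mem_orthogonal_of_forall_inner_eq_zero {ι : Type*}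
    {K : Submodule 𝕜 E} [K.HasOrthogonalProjection] (b : HilbertBasis ι 𝕜 K) {x : E}
    (h : ∀ i, ⟪(b i : E), x⟫_𝕜 = 0) : x ∈ Kᗮ := by
  rw [← orthogonalProjectionOnto_eq_zero_iff]
  refine b.repr.injective (lp.ext (funext fun i => ?_))
  rw [b.repr_apply_apply, inner_orthogonalProjectionOnto_eq_of_mem_left, h, map_zero]
  rfl

theorem _root_.HilbertBasis.nonempty_equiv_of_finite {ι κ : Type*} [Finite ι]
    (b : HilbertBasis ι 𝕜 E) (c : HilbertBasis κ 𝕜 E) : Nonempty (ι ≃ κ) := by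
  have := Fintype.ofFinite ι
  have : FiniteDimensional 𝕜 E := .of_basis b.toOrthonormalBasis.toBasis
  have : Finite κ := c.orthonormal.linearIndependent.finite
  have := Fintype.ofFinite κ
  exact ⟨b.toOrthonormalBasis.toBasis.indexEquiv c.toOrthonormalBasis.toBasis⟩

open Cardinal in
theorem _root_.HilbertBasis.lift_mk_le_of_orthonormal {ι : Type u} {κ : Type v} [Infinite ι]
    (b : HilbertBasis ι 𝕜 E) {v : κ → E} (hv : Orthonormal 𝕜 v) :
    lift.{u} #κ ≤ lift.{v} #ι := by
  have hne : ∀ k, ∃ i, ⟪b i, v k⟫_𝕜 ≠ 0 := by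
    intro k
    by_contra! h
    refine hv.ne_zero k (b.repr.map_eq_zero_iff.1 (lp.ext (funext fun i => ?_)))
    rw [b.repr_apply_apply, h i]
    rfl
  choose g hg using hne
  -- Bessel's inequality: `b i` has a nonzero inner product with only countably many `v k`.
  have hfiber : ∀ i, lift.{u} #(g ⁻¹' {i}) ≤ ℵ₀ := by
    intro i
    refine lift_le_aleph0.2 (mk_le_aleph0_iff.2 (Set.Countable.to_subtype ?_))
    refine (hv.inner_products_summable (b i)).countable_support.mono fun k hk => ?_
    have := hg k
    simp_all [inner_eq_zero_symm]
  calc lift.{u} #κ ≤ lift.{v} #ι * ℵ₀ := lift_mk_le_lift_mk_mul_of_lift_mk_preimage_le g hfiber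
    _ = lift.{v} #ι := mul_aleph0_eq (aleph0_le_lift.2 (aleph0_le_mk ι))

theorem _root_.HilbertBasis.nonempty_equiv {ι : Type u} {κ : Type v} (b : HilbertBasis ι 𝕜 E)
    (c : HilbertBasis κ 𝕜 E) : Nonempty (ι ≃ κ) := by
  rcases finite_or_infinite ι with hι | hι
  · exact b.nonempty_equiv_of_finite c
  rcases finite_or_infinite κ with hκ | hκ
  · exact (c.nonempty_equiv_of_finite b).map Equiv.symm
  exact Cardinal.lift_mk_eq'.1 (le_antisymm (c.lift_mk_le_of_orthonormal b.orthonormal)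
    (b.lift_mk_le_of_orthonormal c.orthonormal))

variable [CompleteSpace E]

def _root_.HilbertBasis.reindex {ι κ : Type*} (b : HilbertBasis κ 𝕜 E) (σ : ι ≃ κ) :
    HilbertBasis ι 𝕜 E :=
  HilbertBasis.mk (b.orthonormal.comp σ σ.injective)
    (by rw [σ.surjective.range_comp, b.dense_span])

@[simp]
theorem _root_.HilbertBasis.reindex_apply {ι κ : Type*} (b : HilbertBasis κ 𝕜 E) (σ : ι ≃ κ)
    (i : ι) : b.reindex σ i = b (σ i) := by
  simp [HilbertBasis.reindex]

theorem _root_.HilbertBasis.exists_mem_or_mem_orthogonal {ι : Type*} (b₀ : HilbertBasis ι 𝕜 E)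
    (K : Submodule 𝕜 E) [CompleteSpace K] :
    ∃ b : HilbertBasis ι 𝕜 E, ∀ i, b i ∈ K ∨ b i ∈ Kᗮ := by
  obtain ⟨w₁, b₁, -⟩ := exists_hilbertBasis 𝕜 K
  obtain ⟨w₂, b₂, -⟩ := exists_hilbertBasis 𝕜 Kᗮ
  let v : w₁ ⊕ w₂ → E := Sum.elim (fun i => (b₁ i : E)) (fun j => (b₂ j : E))
  have hv : Orthonormal 𝕜 v :=
    (b₁.orthonormal.comp_linearIsometry K.subtypeₗᵢ).sumElim
      (b₂.orthonormal.comp_linearIsometry Kᗮ.subtypeₗᵢ)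
      fun i j => inner_right_of_mem_orthogonal (b₁ i).2 (b₂ j).2
  have hsp : (span 𝕜 (Set.range v))ᗮ = ⊥ := by
    refine eq_bot_iff.2 fun x hx => ?_
    have hx' : ∀ s, ⟪v s, x⟫_𝕜 = 0 :=
      fun s => (mem_orthogonal _ _).1 hx _ (subset_span ⟨s, rfl⟩)
    have h₁ : x ∈ Kᗮ := b₁.mem_orthogonal_of_forall_inner_eq_zero fun i => hx' (.inl i)
    have h₂ : x ∈ Kᗮᗮ := b₂.mem_orthogonal_of_forall_inner_eq_zero fun j => hx' (.inr j)
    exact (inf_orthogonal_eq_bot Kᗮ).le ⟨h₁, h₂⟩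
  obtain ⟨σ⟩ := b₀.nonempty_equiv (HilbertBasis.mkOfOrthogonalEqBot hv hsp)
  refine ⟨(HilbertBasis.mkOfOrthogonalEqBot hv hsp).reindex σ, fun i => ?_⟩
  rw [HilbertBasis.reindex_apply, HilbertBasis.coe_mkOfOrthogonalEqBot]
  rcases σ i with j | j
  · exact .inl (b₁ j).2
  · exact .inr (b₂ j).2

end HilbertBasis

section Operators

variable {E F G : Type*} [NormedAddCommGroup E] [InnerProductSpace ℂ E]
  [NormedAddCommGroup F] [InnerProductSpace ℂ F] [NormedAddCommGroup G] [InnerProductSpace ℂ G]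

theorem range_comp_of_surjective (A : F →L[ℂ] G) {T : E →L[ℂ] F} (hT : Function.Surjective T) :
    LinearMap.range (A ∘L T : E →ₗ[ℂ] G) = LinearMap.range (A : F →ₗ[ℂ] G) :=
  LinearMap.range_comp_of_range_eq_top _ (LinearMap.range_eq_top.2 hT)

variable [CompleteSpace E] [CompleteSpace F] [CompleteSpace G]

theorem comp_comp_adjoint_eq_comp_adjoint_comp (A B : F →L[ℂ] G) (T : E →L[ℂ] F) :
    A ∘L (T ∘L adjoint T) ∘L adjoint B = (A ∘L T) ∘L adjoint (B ∘L T) := by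
  rw [adjoint_comp]
  rfl

theorem comp_adjoint_eq_zero_symm {A B : E →L[ℂ] F} (h : A ∘L adjoint B = 0) :
    B ∘L adjoint A = 0 := by
  simpa [adjoint_comp] using congrArg adjoint h

theorem comp_linearIsometryEquiv_comp_adjoint (A B : F →L[ℂ] G) (U : E ≃ₗᵢ[ℂ] F) :
    (A ∘L (U : E →L[ℂ] F)) ∘L adjoint (B ∘L (U : E →L[ℂ] F)) = A ∘L adjoint B := by
  ext x
  simp [adjoint_comp, LinearIsometryEquiv.adjoint_eq_symm]

theorem exists_hilbertBasis_forall_eq_zero_or_eq_zero {ι : Type*} (b₀ : HilbertBasis ι ℂ E)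
    {A B : E →L[ℂ] F} (h : A ∘L adjoint B = 0) :
    ∃ b : HilbertBasis ι ℂ E, ∀ i, A (b i) = 0 ∨ B (b i) = 0 := by
  have : CompleteSpace (LinearMap.ker (A : E →ₗ[ℂ] F)) := A.isClosed_ker.completeSpace_coe
  obtain ⟨b, hb⟩ := b₀.exists_mem_or_mem_orthogonal (LinearMap.ker (A : E →ₗ[ℂ] F))
  have hker : (LinearMap.ker (A : E →ₗ[ℂ] F))ᗮ ≤ LinearMap.ker (B : E →ₗ[ℂ] F) := by
    rw [A.orthogonal_ker]
    refine Submodule.topologicalClosure_minimal _ ?_ B.isClosed_ker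
    rintro _ ⟨y, rfl⟩
    exact congr($(comp_adjoint_eq_zero_symm h) y)
  exact ⟨b, fun i => (hb i).imp id fun hi => hker hi⟩

end Operators

section Idempotent

variable {Q : H →L[ℂ] H}

theorem range_one_sub_of_isIdempotentElem (hQ : IsIdempotentElem Q) :
    LinearMap.range ((1 - Q : H →L[ℂ] H) : H →ₗ[ℂ] H) = LinearMap.ker (Q : H →ₗ[ℂ] H) :=
  (LinearMap.IsIdempotentElem.ker_eq_range_one_sub hQ.toLinearMap).symm

theorem isClosed_range_of_isIdempotentElem [CompleteSpace H] (hQ : IsIdempotentElem Q) :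
    IsClosed (LinearMap.range (Q : H →ₗ[ℂ] H) : Set H) := by
  rw [LinearMap.IsIdempotentElem.range_eq_ker_one_sub hQ.toLinearMap]
  exact (1 - Q).isClosed_ker

variable {J : H →L[ℂ] H}

theorem ite_re_inner_nonneg_of_mem_QSet (hQ : Q ∈ QSet J) {x : H} (hx : Q x = x ∨ Q x = 0) :
    (if 0 ≤ (⟪J x, x⟫).re then x else 0) = Q x ∧
      (if 0 ≤ (⟪J x, x⟫).re then 0 else x) = (1 - Q) x := by
  obtain ⟨-, hpos, hneg⟩ := hQ
  rcases hx with hx | hx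
  · simp [hpos.re_inner_nonneg ⟨x, hx⟩, hx]
  · by_cases hre : 0 ≤ (⟪J x, x⟫).re
    · obtain rfl := hneg.eq_zero_of_re_inner_nonneg hx hre
      simp
    · simp [hre, hx]

end Idempotent

def IsJSplitting {E : Type*} [NormedAddCommGroup E] [InnerProductSpace ℂ E] [CompleteSpace E]
    [CompleteSpace H] (J : H →L[ℂ] H) (T T₁ T₂ : E →L[ℂ] H) : Prop :=
  IsClosed (LinearMap.range (T₁ : E →ₗ[ℂ] H) : Set H) ∧
    IsClosed (LinearMap.range (T₂ : E →ₗ[ℂ] H) : Set H) ∧ T = T₁ + T₂ ∧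
    UnifJPos J (LinearMap.range (T₁ : E →ₗ[ℂ] H)) ∧ UnifJNeg J (LinearMap.range (T₂ : E →ₗ[ℂ] H)) ∧
    T₁ ∘L adjoint T₂ = 0 ∧ T₂ ∘L adjoint T₁ = 0

section Splitting

variable [CompleteSpace H] {J : H →L[ℂ] H} {E : Type*} [NormedAddCommGroup E]
  [InnerProductSpace ℂ E] [CompleteSpace E] {T T₁ T₂ : E →L[ℂ] H} {Q : H →L[ℂ] H}

theorem IsJSplitting.exists_mem_QSet (hT : Function.Surjective T) (h : IsJSplitting J T T₁ T₂) :
    ∃ Q ∈ QSet J, Q ∘L (T ∘L adjoint T) ∘L adjoint (1 - Q) = 0 := by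
  obtain ⟨h₁, h₂, rfl, hpos, hneg, h₁₂, -⟩ := h
  have hsup : LinearMap.range (T₁ : E →ₗ[ℂ] H) ⊔ LinearMap.range (T₂ : E →ₗ[ℂ] H) = ⊤ := by
    refine eq_top_iff.2 fun y _ => ?_
    obtain ⟨x, rfl⟩ := hT y
    exact Submodule.add_mem_sup ⟨x, rfl⟩ ⟨x, rfl⟩
  have hcompl := Submodule.IsCompl.isTopCompl_of_isClosed
    ⟨hpos.disjoint hneg, codisjoint_iff.2 hsup⟩ h₁ h₂
  have hQ₁ : Submodule.projectionL _ _ hcompl ∘L (T₁ + T₂) = T₁ := by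
    ext x
    rw [comp_apply, add_apply, map_add,
      (Submodule.projectionL_eq_self_iff hcompl (T₁ x)).2 ⟨x, rfl⟩,
      (Submodule.projectionL_apply_eq_zero_iff hcompl (x := T₂ x)).2 ⟨x, rfl⟩, add_zero]
  have hQ₂ : (1 - Submodule.projectionL _ _ hcompl) ∘L (T₁ + T₂) = T₂ := by
    rw [sub_comp, hQ₁, one_def, id_comp, add_sub_cancel_left]
  refine ⟨_, ⟨Submodule.isIdempotentElem_projectionL hcompl, ?_, ?_⟩, ?_⟩
  · rwa [Submodule.range_projectionL]
  · rwa [Submodule.ker_projectionL]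
  · rw [comp_comp_adjoint_eq_comp_adjoint_comp, hQ₁, hQ₂, h₁₂]

theorem exists_isJSplitting_of_mem_QSet (hT : Function.Surjective T) (hQ : Q ∈ QSet J)
    (h : Q ∘L (T ∘L adjoint T) ∘L adjoint (1 - Q) = 0) :
    ∃ T₁ T₂, IsJSplitting J T T₁ T₂ := by
  obtain ⟨hidem, hpos, hneg⟩ := hQ
  rw [comp_comp_adjoint_eq_comp_adjoint_comp] at h
  have h₁ := range_comp_of_surjective Q hT
  have h₂ : LinearMap.range ((1 - Q) ∘L T : E →ₗ[ℂ] H) = LinearMap.ker (Q : H →ₗ[ℂ] H) := by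
    rw [range_comp_of_surjective _ hT, range_one_sub_of_isIdempotentElem hidem]
  refine ⟨Q ∘L T, (1 - Q) ∘L T, ?_, ?_, ?_, h₁ ▸ hpos, h₂ ▸ hneg, h, comp_adjoint_eq_zero_symm h⟩
  · exact h₁ ▸ isClosed_range_of_isIdempotentElem hidem
  · exact h₂ ▸ Q.isClosed_ker
  · rw [← add_comp, add_sub_cancel, one_def, id_comp]

end Splitting

section SequenceSpace

open scoped lp

variable {I : Type*}

theorem ext_lp_single {A B : ℓ²(I, ℂ) →L[ℂ] H}
    (h : ∀ i, A (lp.single 2 i 1) = B (lp.single 2 i 1)) : A = B :=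
  lp.ext_continuousLinearMap ENNReal.ofNat_ne_top fun i => ContinuousLinearMap.ext_ring (h i)

variable [CompleteSpace H]

theorem adjoint_apply_apply_eq_inner (A : ℓ²(I, ℂ) →L[ℂ] H) (y : H) (i : I) :
    adjoint A y i = ⟪A (lp.single 2 i 1), y⟫ := by
  rw [← adjoint_inner_right, lp.inner_single_left]
  simp

theorem comp_adjoint_eq_zero_of_forall_single {A B : ℓ²(I, ℂ) →L[ℂ] H}
    (h : ∀ i, A (lp.single 2 i 1) = 0 ∨ B (lp.single 2 i 1) = 0) : A ∘L adjoint B = 0 := by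
  ext x
  refine ext_inner_left ℂ fun y => ?_
  rw [comp_apply, ← adjoint_inner_left, lp.inner_eq_tsum, zero_apply, inner_zero_right]
  refine (tsum_congr fun i => ?_).trans tsum_zero
  rw [adjoint_apply_apply_eq_inner, adjoint_apply_apply_eq_inner]
  rcases h i with hi | hi <;> simp [hi]

variable {J : H →L[ℂ] H} {T : ℓ²(I, ℂ) →L[ℂ] H}

theorem exists_isJSplitting_of_isJFrame (U : ℓ²(I, ℂ) ≃ₗᵢ[ℂ] ℓ²(I, ℂ))
    (hU : IsJFrame J fun i => T (U (lp.single 2 i 1))) : ∃ T₁ T₂, IsJSplitting J T T₁ T₂ := by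
  obtain ⟨T', Tp, Tm, hT', hTp, hTm, hmaxp, hmaxm⟩ := hU
  have hT'U : T' = T ∘L (U : ℓ²(I, ℂ) →L[ℂ] ℓ²(I, ℂ)) := ext_lp_single hT'
  have hsum : T' = Tp + Tm := ext_lp_single fun i => by
    rw [hT' i, add_apply, hTp i, hTm i]
    dsimp only
    split_ifs <;> simp
  have hdisj (i : I) : Tp (lp.single 2 i 1) = 0 ∨ Tm (lp.single 2 i 1) = 0 := by
    rw [hTp i, hTm i]
    dsimp only
    split_ifs <;> simp
  have hV : Function.Surjective (U.symm : ℓ²(I, ℂ) →L[ℂ] ℓ²(I, ℂ)) := U.symm.surjective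
  have hp := range_comp_of_surjective Tp hV
  have hm := range_comp_of_surjective Tm hV
  refine ⟨Tp ∘L (U.symm : ℓ²(I, ℂ) →L[ℂ] ℓ²(I, ℂ)), Tm ∘L (U.symm : ℓ²(I, ℂ) →L[ℂ] ℓ²(I, ℂ)),
    hp ▸ hmaxp.isClosed, hm ▸ hmaxm.isClosed, ?_, hp ▸ hmaxp.1, hm ▸ hmaxm.1, ?_, ?_⟩
  · rw [← add_comp, ← hsum, hT'U]
    ext x
    simp
  · rw [comp_linearIsometryEquiv_comp_adjoint]
    exact comp_adjoint_eq_zero_of_forall_single hdisj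
  · rw [comp_linearIsometryEquiv_comp_adjoint]
    exact comp_adjoint_eq_zero_of_forall_single fun i => (hdisj i).symm

theorem exists_isJFrame_of_mem_QSet (hT : Function.Surjective T) {Q : H →L[ℂ] H}
    (hQ : Q ∈ QSet J) (h : Q ∘L (T ∘L adjoint T) ∘L adjoint (1 - Q) = 0) :
    ∃ U : ℓ²(I, ℂ) ≃ₗᵢ[ℂ] ℓ²(I, ℂ), IsJFrame J fun i => T (U (lp.single 2 i 1)) := by
  have hidem : IsIdempotentElem Q := hQ.1
  rw [comp_comp_adjoint_eq_comp_adjoint_comp] at h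
  obtain ⟨b, hb⟩ :=
    exists_hilbertBasis_forall_eq_zero_or_eq_zero (default : HilbertBasis I ℂ ℓ²(I, ℂ)) h
  set U := (b.repr.symm : ℓ²(I, ℂ) →L[ℂ] ℓ²(I, ℂ))
  have hsign (i : I) := ite_re_inner_nonneg_of_mem_QSet hQ (x := T (U (lp.single 2 i 1))) <| by
    rw [show U (lp.single 2 i 1) = b i from b.repr_symm_single i]
    refine (hb i).symm.imp (fun hi => ?_) id
    rw [comp_apply, sub_apply, one_apply_eq_self, sub_eq_zero] at hi
    exact hi.symm
  have hUT : Function.Surjective (T ∘L U) := hT.comp b.repr.symm.surjective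
  have hp := range_comp_of_surjective Q hUT
  have hm : LinearMap.range ((1 - Q) ∘L T ∘L U : ℓ²(I, ℂ) →ₗ[ℂ] H) =
      LinearMap.ker (Q : H →ₗ[ℂ] H) := by
    rw [range_comp_of_surjective _ hUT, range_one_sub_of_isIdempotentElem hidem]
  have hsup := (LinearMap.IsIdempotentElem.isCompl hidem.toLinearMap).sup_eq_top
  refine ⟨b.repr.symm, T ∘L U, Q ∘L T ∘L U, (1 - Q) ∘L T ∘L U, fun i => rfl,
    fun i => (hsign i).1.symm, fun i => by exact (hsign i).2.symm, ?_, ?_⟩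
  · rw [hp]
    exact hQ.2.1.maxUnifJPos_of_sup_eq_top hQ.2.2 hsup
  · rw [hm]
    exact hQ.2.2.maxUnifJNeg_of_sup_eq_top hQ.2.1 hsup

end SequenceSpace

theorem statement11_general {H I : Type*} [NormedAddCommGroup H] [InnerProductSpace ℂ H] [CompleteSpace H]
    (J : H →L[ℂ] H) (T : lp (fun _ : I => ℂ) 2 →L[ℂ] H) (hsurj : Function.Surjective T) :
    ((∃ U : lp (fun _ : I => ℂ) 2 ≃ₗᵢ[ℂ] lp (fun _ : I => ℂ) 2,
        IsJFrame J (fun i => T (U (lp.single 2 i 1)))) ↔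
      (∃ Q ∈ QSet J, Q ∘L (T ∘L adjoint T) ∘L adjoint (1 - Q) = 0)) ∧
    ((∃ Q ∈ QSet J, Q ∘L (T ∘L adjoint T) ∘L adjoint (1 - Q) = 0) ↔
      (∃ T1 T2 : lp (fun _ : I => ℂ) 2 →L[ℂ] H,
        IsClosed (LinearMap.range (T1 : lp (fun _ : I => ℂ) 2 →ₗ[ℂ] H) : Set H) ∧ IsClosed (LinearMap.range (T2 : lp (fun _ : I => ℂ) 2 →ₗ[ℂ] H) : Set H) ∧
        T = T1 + T2 ∧ UnifJPos J (LinearMap.range (T1 : lp (fun _ : I => ℂ) 2 →ₗ[ℂ] H)) ∧ UnifJNeg J (LinearMap.range (T2 : lp (fun _ : I => ℂ) 2 →ₗ[ℂ] H)) ∧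
        T1 ∘L adjoint T2 = 0 ∧ T2 ∘L adjoint T1 = 0)) := by
  refine ⟨⟨fun ⟨U, hU⟩ => ?_, fun ⟨Q, hQ, h⟩ => exists_isJFrame_of_mem_QSet hsurj hQ h⟩,
    ⟨fun ⟨Q, hQ, h⟩ => exists_isJSplitting_of_mem_QSet hsurj hQ h,
      fun ⟨_, _, h⟩ => IsJSplitting.exists_mem_QSet hsurj h⟩⟩
  obtain ⟨T₁, T₂, h⟩ := exists_isJSplitting_of_isJFrame U hU
  exact h.exists_mem_QSet hsurj

/-- characterizations, up to a unitary change of coordinates, of the synthesis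
operators of `J`-frames. -/
theorem statement11 {H I : Type*} [NormedAddCommGroup H] [InnerProductSpace ℂ H] [CompleteSpace H]
    (J : H →L[ℂ] H) (hJsa : IsSelfAdjoint J) (hJsq : J ∘L J = 1)
    (T : lp (fun _ : I => ℂ) 2 →L[ℂ] H) (hsurj : Function.Surjective T) :
    ((∃ U : lp (fun _ : I => ℂ) 2 ≃ₗᵢ[ℂ] lp (fun _ : I => ℂ) 2,
        IsJFrame J (fun i => T (U (lp.single 2 i 1)))) ↔
      (∃ Q ∈ QSet J, Q ∘L (T ∘L adjoint T) ∘L adjoint (1 - Q) = 0)) ∧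
    ((∃ Q ∈ QSet J, Q ∘L (T ∘L adjoint T) ∘L adjoint (1 - Q) = 0) ↔
      (∃ T1 T2 : lp (fun _ : I => ℂ) 2 →L[ℂ] H,
        IsClosed (LinearMap.range (T1 : lp (fun _ : I => ℂ) 2 →ₗ[ℂ] H) : Set H) ∧ IsClosed (LinearMap.range (T2 : lp (fun _ : I => ℂ) 2 →ₗ[ℂ] H) : Set H) ∧
        T = T1 + T2 ∧ UnifJPos J (LinearMap.range (T1 : lp (fun _ : I => ℂ) 2 →ₗ[ℂ] H)) ∧ UnifJNeg J (LinearMap.range (T2 : lp (fun _ : I => ℂ) 2 →ₗ[ℂ] H)) ∧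
        T1 ∘L adjoint T2 = 0 ∧ T2 ∘L adjoint T1 = 0)) :=
  statement11_general J T hsurj

end KreinFrames
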